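/- For every integer g ≥ 1 there exists a constant c(g) > 0 such that for every prime p and every prime power q = p^r, letting s be the smallest power of p such that q divides s², the set Λ''_q ∩ V_g is finite and #(Λ''_q ∩ V_g) ≤ (v_g + c(g))·q^{g(g+1)/4 − 1/2}. -/

import Mathlib

open Polynomial

/-- The polynomial `P(T) = (T^{2g}+q^g) + a_1(T^{2g-1}+q^{g-1}T) + ⋯ +
    a_{g-1}(T^{g+1}+qT^{g-1}) + a_g T^g`, where `a i` is `a_{i+1}`. -/
noncomputable def weilForm (q g : ℕ) (a : Fin g → ℤ) : Polynomial ℤ :=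
  X ^ (2*g) + C ((q:ℤ)^g) +
    ∑ i : Fin g, C (a i) *
      (if i.1 + 1 = g then X ^ g
       else X ^ (2*g - (i.1+1)) + C ((q:ℤ)^(g - (i.1+1))) * X ^ (i.1+1))

/-- A Weil q-polynomial of degree 2g: monic of degree 2g, all complex roots of
    absolute value √q, and all real roots of even multiplicity. -/
def IsWeilPoly (q g : ℕ) (P : Polynomial ℤ) : Prop :=
  P.Monic ∧ P.natDegree = 2*g ∧
  (∀ z : ℂ, (P.map (Int.castRingHom ℂ)).IsRoot z → ‖z‖ = Real.sqrt q) ∧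
  (∀ x : ℝ, Even ((P.map (Int.castRingHom ℝ)).rootMultiplicity x))

/-- Ordinary: p does not divide a_g, the coefficient of T^g. -/
def IsOrdinary (p g : ℕ) (P : Polynomial ℤ) : Prop := ¬ ((p:ℤ) ∣ P.coeff g)

/-- The real polynomial `Q(T) = (T^{2g}+1) + b_1(T^{2g-1}+T) + ⋯ + b_g T^g`. -/
noncomputable def symQ (g : ℕ) (b : Fin g → ℝ) : Polynomial ℝ :=
  X ^ (2*g) + 1 +
    ∑ i : Fin g, C (b i) *
      (if i.1 + 1 = g then X ^ g
       else X ^ (2*g - (i.1+1)) + X ^ (i.1+1))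

/-- All complex roots on the unit circle and all real roots of even multiplicity. -/
def UnitCircleEven (Q : Polynomial ℝ) : Prop :=
  (∀ z : ℂ, (Q.map (algebraMap ℝ ℂ)).IsRoot z → ‖z‖ = 1) ∧
  (∀ x : ℝ, Even (Q.rootMultiplicity x))

/-- The set V_g ⊆ ℝ^g. -/
def Vset (g : ℕ) : Set (Fin g → ℝ) := {b | UnitCircleEven (symQ g b)}

/-- v_g, the Lebesgue measure of V_g. -/
noncomputable def vVol (g : ℕ) : ℝ := (MeasureTheory.volume (Vset g)).toReal

/-- The lattice Λ''_q ⊆ ℝ^g generated by `q^{-1/2}e_1, …, q^{-(g-1)/2}e_{g-1}`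
    and `s·q^{-g/2}e_g`. -/
noncomputable def LambdaPP (q s g : ℕ) : Set (Fin g → ℝ) :=
  {x | ∃ k : Fin g → ℤ, x = fun i =>
    (k i : ℝ) * (if i.1 + 1 = g then (s:ℝ) / (Real.sqrt q)^g
                 else 1 / (Real.sqrt q)^(i.1+1))}

lemma symQ_rest_degree_lt (g : ℕ) (hg : 1 ≤ g) (b : Fin g → ℝ) :
    ((1 : ℝ[X]) + ∑ i : Fin g, C (b i) *
      (if i.1 + 1 = g then X ^ g
       else X ^ (2*g - (i.1+1)) + X ^ (i.1+1))).degree < (2*g : ℕ) := by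
  have hb : ((1 : ℝ[X]) + ∑ i : Fin g, C (b i) *
      (if i.1 + 1 = g then X ^ g
       else X ^ (2*g - (i.1+1)) + X ^ (i.1+1))).degree ≤ ((2*g - 1 : ℕ) : WithBot ℕ) := by
    refine (degree_add_le _ _).trans (max_le ?_ ?_)
    · exact degree_one_le.trans (by exact_mod_cast Nat.zero_le _)
    · refine (degree_sum_le _ _).trans (Finset.sup_le fun i _ => ?_)
      refine (degree_mul_le _ _).trans ?_
      have h0 : (C (b i)).degree ≤ 0 := degree_C_le
      have hi := i.2
      split_ifs with h
      · refine le_trans (add_le_add h0 (degree_X_pow_le g)) ?_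
        rw [zero_add]
        exact_mod_cast (by omega : g ≤ 2*g - 1)
      · refine le_trans (add_le_add h0 (degree_add_le _ _)) ?_
        rw [zero_add]
        refine max_le ((degree_X_pow_le _).trans ?_) ((degree_X_pow_le _).trans ?_) <;>
          exact_mod_cast (by omega)
  refine hb.trans_lt ?_
  exact_mod_cast (by omega : 2*g - 1 < 2*g)

lemma symQ_eq (g : ℕ) (b : Fin g → ℝ) :
    symQ g b = X ^ (2*g) + ((1 : ℝ[X]) + ∑ i : Fin g, C (b i) *
      (if i.1 + 1 = g then X ^ g
       else X ^ (2*g - (i.1+1)) + X ^ (i.1+1))) := by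
  rw [symQ]; ring

lemma symQ_monic (g : ℕ) (hg : 1 ≤ g) (b : Fin g → ℝ) : (symQ g b).Monic := by
  rw [symQ_eq]
  have hlt : ((1 : ℝ[X]) + ∑ i : Fin g, C (b i) *
      (if i.1 + 1 = g then X ^ g
       else X ^ (2*g - (i.1+1)) + X ^ (i.1+1))).degree < ((X : ℝ[X]) ^ (2*g)).degree := by
    rw [degree_X_pow]; exact symQ_rest_degree_lt g hg b
  exact (monic_X_pow _).add_of_left hlt

lemma symQ_natDegree (g : ℕ) (hg : 1 ≤ g) (b : Fin g → ℝ) : (symQ g b).natDegree = 2*g := by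
  rw [symQ_eq]
  have hlt : ((1 : ℝ[X]) + ∑ i : Fin g, C (b i) *
      (if i.1 + 1 = g then X ^ g
       else X ^ (2*g - (i.1+1)) + X ^ (i.1+1))).degree < ((X : ℝ[X]) ^ (2*g)).degree := by
    rw [degree_X_pow]; exact symQ_rest_degree_lt g hg b
  have := degree_add_eq_left_of_degree_lt hlt
  rw [degree_X_pow] at this
  exact natDegree_eq_of_degree_eq_some this

lemma symQ_coeff (g : ℕ) (hg : 1 ≤ g) (b : Fin g → ℝ) (i : Fin g) :
    (symQ g b).coeff (2*g - (i.1+1)) = b i := by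
  have hi := i.2
  rw [symQ]
  rw [coeff_add, coeff_add, coeff_X_pow, coeff_one, finset_sum_coeff]
  rw [if_neg (by omega), if_neg (by omega), zero_add, zero_add]
  rw [Finset.sum_eq_single i]
  · rw [coeff_C_mul]
    split_ifs with h
    · rw [coeff_X_pow, if_pos (by omega), mul_one]
    · rw [coeff_add, coeff_X_pow, coeff_X_pow, if_pos rfl, if_neg (by omega), add_zero, mul_one]
  · intro j _ hj
    have hj2 := j.2
    have hji : j.1 ≠ i.1 := fun h => hj (Fin.ext h)
    rw [coeff_C_mul]
    split_ifs with h
    · rw [coeff_X_pow, if_neg (by omega), mul_zero]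
    · rw [coeff_add, coeff_X_pow, coeff_X_pow, if_neg (by omega), if_neg (by omega), add_zero, mul_zero]
  · intro h; exact absurd (Finset.mem_univ i) h

lemma esymm_abs_le (s : Multiset ℂ) (h : ∀ z ∈ s, ‖z‖ = 1) (k : ℕ) :
    ‖s.esymm k‖ ≤ ((Multiset.card s).choose k : ℝ) := by
  rw [Multiset.esymm]
  refine (norm_multiset_sum_le _).trans ?_
  rw [Multiset.map_map]
  have hle : ∀ x ∈ Multiset.map (fun t : Multiset ℂ => ‖t.prod‖) (s.powersetCard k), x ≤ 1 := by
    intro x hx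
    rw [Multiset.mem_map] at hx
    obtain ⟨t, ht, rfl⟩ := hx
    have hts := (Multiset.mem_powersetCard.mp ht).1
    rw [show ‖t.prod‖ = (t.map (fun z : ℂ => ‖z‖)).prod from map_multiset_prod (normHom (α := ℂ)) t]
    have : ∀ y ∈ Multiset.map (fun z : ℂ => ‖z‖) t, y = 1 := by
      intro y hy
      rw [Multiset.mem_map] at hy
      obtain ⟨z, hz, rfl⟩ := hy
      exact h z (Multiset.mem_of_le hts hz)
    rw [Multiset.prod_eq_one this]
  calc (Multiset.map (fun i : Multiset ℂ => ‖(fun t : Multiset ℂ => t.prod) i‖) (s.powersetCard k)).sum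
      ≤ (Multiset.card (Multiset.map (fun t : Multiset ℂ => ‖t.prod‖) (s.powersetCard k))) • (1:ℝ) :=
        Multiset.sum_le_card_nsmul _ _ hle
    _ = ((Multiset.card s).choose k : ℝ) := by
        rw [Multiset.card_map, Multiset.card_powersetCard, nsmul_eq_mul, mul_one]

lemma vset_bound (g : ℕ) (hg : 1 ≤ g) {b : Fin g → ℝ} (hb : b ∈ Vset g) (i : Fin g) :
    |b i| ≤ ((2*g : ℝ))^(2*g) := by
  have hi := i.2
  set Q := symQ g b with hQ
  have hmon : Q.Monic := symQ_monic g hg b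
  have hdeg : Q.natDegree = 2*g := symQ_natDegree g hg b
  set Qc := Q.map (algebraMap ℝ ℂ) with hQc
  have hmonc : Qc.Monic := hmon.map _
  have hdegc : Qc.natDegree = 2*g := by rw [hQc, hmon.natDegree_map, hdeg]
  have hcard : Multiset.card Qc.roots = Qc.natDegree :=
    Polynomial.splits_iff_card_roots.mp (IsAlgClosed.splits Qc)
  have hroots : ∀ z ∈ Qc.roots, ‖z‖ = 1 := by
    intro z hz
    exact hb.1 z (isRoot_of_mem_roots hz)
  have hn : 2*g - (i.1+1) ≤ Qc.natDegree := by omega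
  have hvieta := Polynomial.coeff_eq_esymm_roots_of_card hcard hn
  have hQcoeff : Qc.coeff (2*g - (i.1+1)) = ((b i : ℝ) : ℂ) := by
    rw [hQc, coeff_map, symQ_coeff g hg b i]; rfl
  have hsub : Qc.natDegree - (2*g - (i.1+1)) = i.1+1 := by omega
  rw [hQcoeff, hmonc.leadingCoeff, one_mul, hsub] at hvieta
  have habs : |b i| = ‖Qc.roots.esymm (i.1+1)‖ := by
    have : ‖((b i : ℝ) : ℂ)‖ = |b i| := by rw [Complex.norm_real, Real.norm_eq_abs]
    rw [← this, hvieta, norm_mul, norm_pow, norm_neg, norm_one, one_pow, one_mul]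
  rw [habs]
  calc ‖Qc.roots.esymm (i.1+1)‖
      ≤ ((Multiset.card Qc.roots).choose (i.1+1) : ℝ) := esymm_abs_le _ hroots _
    _ ≤ ((2*g : ℝ))^(2*g) := by
        rw [hcard, hdegc]
        calc (((2*g).choose (i.1+1) : ℕ) : ℝ) ≤ (((2*g)^(i.1+1) : ℕ) : ℝ) := by
              exact_mod_cast Nat.choose_le_pow (2*g) (i.1+1)
          _ ≤ (((2*g)^(2*g) : ℕ) : ℝ) := by
              exact_mod_cast Nat.pow_le_pow_right (by omega) (by omega)
          _ = ((2*g : ℝ))^(2*g) := by push_cast; ring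

lemma gauss_aux : ∀ n : ℕ, ∑ i ∈ Finset.range n, ((i:ℝ)+1) = n*(n+1)/2 := by
  intro n
  induction n with
  | zero => simp
  | succ m ih => rw [Finset.sum_range_succ, ih]; push_cast; ring

/-- for q = p^r and `s` the smallest power of p with `q ∣ s²`,
    the set `Λ''_q ∩ V_g` is finite of cardinality at most
    `(v_g + c(g))·q^{g(g+1)/4 - 1/2}`. -/
theorem stmt15 (g : ℕ) (hg : 1 ≤ g) :
    ∃ c > 0, ∀ (p r s : ℕ), p.Prime → 1 ≤ r →
      IsLeast {t : ℕ | (∃ k : ℕ, t = p^k) ∧ p^r ∣ t^2} s →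
      (LambdaPP (p^r) s g ∩ Vset g).Finite ∧
      ((LambdaPP (p^r) s g ∩ Vset g).ncard : ℝ) ≤
        (vVol g + c) * ((p:ℝ)^r) ^ ((g*(g+1) : ℝ)/4 - 1/2) := by
  classical
  set M : ℝ := ((2*g : ℝ))^(2*g) with hM
  have hM0 : 0 ≤ M := by positivity
  refine ⟨(2*M+1)^g, by positivity, ?_⟩
  intro p r s hp hr hs
  set q : ℕ := p^r with hq
  have hq2 : (2:ℕ) ≤ q := by
    calc 2 ≤ p := hp.two_le
    _ = p^1 := (pow_one p).symm
    _ ≤ p^r := Nat.pow_le_pow_right hp.pos hr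
  have hqR : (1:ℝ) ≤ (q:ℝ) := by exact_mod_cast hq2.trans' (by norm_num)
  have hqR0 : (0:ℝ) < (q:ℝ) := by positivity
  have hsqrt1 : (1:ℝ) ≤ Real.sqrt q := by
    rw [show (1:ℝ) = Real.sqrt 1 by simp]
    exact Real.sqrt_le_sqrt hqR
  have hsqrt0 : (0:ℝ) < Real.sqrt q := lt_of_lt_of_le one_pos hsqrt1
  obtain ⟨⟨⟨ks, hks⟩, hdvd⟩, -⟩ := hs
  have hs1 : 1 ≤ s := by rw [hks]; exact Nat.one_le_pow _ _ hp.pos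
  have hsR0 : (0:ℝ) < (s:ℝ) := by exact_mod_cast hs1
  have hqs2 : (q:ℝ) ≤ (s:ℝ)^2 := by
    have : q ≤ s^2 := Nat.le_of_dvd (by positivity) hdvd
    exact_mod_cast this
  have hsqs : Real.sqrt q ≤ (s:ℝ) := by
    calc Real.sqrt q ≤ Real.sqrt ((s:ℝ)^2) := Real.sqrt_le_sqrt hqs2
    _ = (s:ℝ) := by rw [Real.sqrt_sq hsR0.le]
  -- spacings
  set d : Fin g → ℝ := fun i => if i.1 + 1 = g then (s:ℝ) / (Real.sqrt q)^g
                 else 1 / (Real.sqrt q)^(i.1+1) with hd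
  have hd0 : ∀ i, 0 < d i := by
    intro i; rw [hd]; dsimp only; split_ifs <;> positivity
  set cc : Fin g → ℕ := fun i => if i.1 + 1 = g then g - 1 else i.1+1 with hcc
  have hinv : ∀ i, 1 / d i ≤ Real.sqrt q ^ (cc i) := by
    intro i
    rw [hd, hcc]; dsimp only
    split_ifs with h
    · rw [one_div_div]
      rw [div_le_iff₀ hsR0]
      calc Real.sqrt q ^ g = Real.sqrt q ^ (g-1) * Real.sqrt q := by
            rw [← pow_succ]; congr 1; omega
      _ ≤ Real.sqrt q ^ (g-1) * s := by
            exact mul_le_mul_of_nonneg_left hsqs (by positivity)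
    · rw [one_div_one_div]
  have he1 : ∀ i, (1:ℝ) ≤ Real.sqrt q ^ (cc i) := by
    intro i
    calc (1:ℝ) = 1 ^ (cc i) := (one_pow _).symm
    _ ≤ Real.sqrt q ^ (cc i) := pow_le_pow_left₀ (by norm_num) hsqrt1 _
  -- integer bounds
  set N : Fin g → ℤ := fun i => ⌊M / d i⌋ with hN
  have hN0 : ∀ i, 0 ≤ N i := fun i => Int.floor_nonneg.mpr (by positivity)
  set T : Finset (Fin g → ℤ) := Fintype.piFinset (fun i => Finset.Icc (-N i) (N i)) with hT
  set F : (Fin g → ℤ) → (Fin g → ℝ) := fun k i => (k i : ℝ) * d i with hF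
  have hsub : LambdaPP q s g ∩ Vset g ⊆ F '' ↑T := by
    rintro x ⟨⟨k, rfl⟩, hxV⟩
    refine ⟨k, ?_, rfl⟩
    rw [Finset.mem_coe, Fintype.mem_piFinset]
    intro i
    rw [Finset.mem_Icc, ← abs_le]
    have hxb : |(k i : ℝ) * d i| ≤ M := vset_bound g hg hxV i
    rw [abs_mul, abs_of_pos (hd0 i)] at hxb
    rw [hN, Int.le_floor]
    push_cast
    rw [le_div_iff₀ (hd0 i)]
    exact hxb
  have hTfin : (F '' (↑T : Set (Fin g → ℤ))).Finite := (T.finite_toSet).image F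
  refine ⟨hTfin.subset hsub, ?_⟩
  have hcount : ((LambdaPP q s g ∩ Vset g).ncard : ℝ) ≤ (T.card : ℝ) := by
    have h1 : (LambdaPP q s g ∩ Vset g).ncard ≤ (F '' ↑T).ncard :=
      Set.ncard_le_ncard hsub hTfin
    have h2 : (F '' (↑T : Set (Fin g → ℤ))).ncard ≤ (↑T : Set (Fin g → ℤ)).ncard :=
      Set.ncard_image_le T.finite_toSet
    rw [Set.ncard_coe_finset] at h2
    exact_mod_cast h1.trans h2
  have hTcard : (T.card : ℝ) = ∏ i : Fin g, (((2 * N i + 1).toNat : ℤ) : ℝ) := by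
    rw [hT, Fintype.card_piFinset]
    push_cast
    refine Finset.prod_congr rfl fun i _ => ?_
    rw [Int.card_Icc]
    congr 1
    omega
  -- per-coordinate bound
  have hcoord : ∀ i : Fin g, (((2 * N i + 1).toNat : ℤ) : ℝ) ≤ (2*M+1) * Real.sqrt q ^ (cc i) := by
    intro i
    rw [Int.toNat_of_nonneg (by have := hN0 i; omega)]
    push_cast
    have hfl : (N i : ℝ) ≤ M / d i := Int.floor_le _
    have h1 : M / d i ≤ M * (Real.sqrt q ^ (cc i)) := by
      rw [div_eq_mul_one_div]
      exact mul_le_mul_of_nonneg_left (hinv i) hM0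
    have h2 := he1 i
    nlinarith [hd0 i]
  have hprod : (T.card : ℝ) ≤ (2*M+1)^g * Real.sqrt q ^ (∑ i : Fin g, cc i) := by
    rw [hTcard]
    calc ∏ i : Fin g, (((2 * N i + 1).toNat : ℤ) : ℝ)
        ≤ ∏ i : Fin g, ((2*M+1) * Real.sqrt q ^ (cc i)) :=
          Finset.prod_le_prod (fun i _ => by positivity) (fun i _ => hcoord i)
      _ = (2*M+1)^g * Real.sqrt q ^ (∑ i : Fin g, cc i) := by
          rw [Finset.prod_mul_distrib, Finset.prod_const, Finset.card_univ, Fintype.card_fin,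
            Finset.prod_pow_eq_pow_sum]
  -- exponent computation
  have hsum : ((∑ i : Fin g, cc i : ℕ) : ℝ) = (g:ℝ)*(g+1)/2 - 1 := by
    push_cast
    have : ∀ i : Fin g, ((cc i : ℕ) : ℝ) = ((i:ℝ)+1) - (if i.1 + 1 = g then 1 else 0) := by
      intro i
      rw [hcc]; dsimp only
      split_ifs with h
      · rw [Nat.cast_sub hg]
        have h2 : ((i:ℕ):ℝ) + 1 = (g:ℝ) := by exact_mod_cast h
        push_cast
        linarith
      · simp
    rw [Finset.sum_congr rfl (fun i _ => this i), Finset.sum_sub_distrib]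
    have hone : (∑ i : Fin g, (if i.1 + 1 = g then (1:ℝ) else 0)) = 1 := by
      rw [Finset.sum_eq_single (⟨g-1, by omega⟩ : Fin g)]
      · rw [if_pos (show g - 1 + 1 = g by omega)]
      · intro j _ hj
        rw [if_neg]
        intro h
        exact hj (Fin.ext (show j.1 = g - 1 by omega))
      · intro h; exact absurd (Finset.mem_univ _) h
    rw [hone, Fin.sum_univ_eq_sum_range (fun i => ((i:ℝ)+1)), gauss_aux]
  have hexp : Real.sqrt q ^ (∑ i : Fin g, cc i) = ((q:ℝ)) ^ ((g*(g+1) : ℝ)/4 - 1/2) := by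
    rw [Real.sqrt_eq_rpow, ← Real.rpow_natCast ((q:ℝ) ^ ((1:ℝ)/2)) _, ← Real.rpow_mul hqR0.le]
    congr 1
    rw [hsum]; ring
  have hvol : 0 ≤ vVol g := ENNReal.toReal_nonneg
  have hrpow : (0:ℝ) ≤ ((q:ℝ)) ^ ((g*(g+1) : ℝ)/4 - 1/2) := Real.rpow_nonneg hqR0.le _
  have hqcast : ((p:ℝ)^r) = (q:ℝ) := by rw [hq]; push_cast; ring
  rw [hqcast]
  calc ((LambdaPP q s g ∩ Vset g).ncard : ℝ) ≤ (T.card : ℝ) := hcount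
    _ ≤ (2*M+1)^g * Real.sqrt q ^ (∑ i : Fin g, cc i) := hprod
    _ = (2*M+1)^g * ((q:ℝ)) ^ ((g*(g+1) : ℝ)/4 - 1/2) := by rw [hexp]
    _ ≤ (vVol g + (2*M+1)^g) * ((q:ℝ)) ^ ((g*(g+1) : ℝ)/4 - 1/2) := by
        refine mul_le_mul_of_nonneg_right ?_ hrpow
        linarith
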